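/- arXiv:2407.05041 — 2 statements merged into one kernel-verified Lean document; each statement's English description precedes it below -/
import Mathlib

section
/- Suppose the local truncation error satisfies |R^j| ≤ C j^{-α-1} for all 1 ≤ j ≤ n, with 0 < α ≤ 1/2. Then ∑_{j=1}^{n} P_{n-j} |R^j| ≤ C' Γ(2-α) K_{1+α,n} ρ^α n^{α-1} for some constant C' depending only on C and α, where K_{1+α,n} = 1 + (1 - n^{-α})/α. -/
/-!
With `w k = (k + 1) ^ (1 - α) - k ^ (1 - α)` and `b = Γ(2 - α) ρ ^ α` we have `a = w / b`, and
the recurrence for `P` is equivalent to the convolution identity `∑_{i ≤ m} P i a (m - i) = 1`.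
The weights `w` are positive, decreasing and log-convex; by Kaluza's argument the last property
makes `P` nonincreasing. Combined with the convolution identity and
`w k ≥ (1 - α) (k + 1) ^ (-α)` this gives `P m ≤ b (m + 1) ^ (α - 1) / (1 - α)` and
`∑_{i < n} P i ≤ b n ^ α / (1 - α)`. In `∑_j P (n - j) j ^ (-α - 1)` the first bound
handles `j ≤ n / 2`, where `∑_j j ^ (-α - 1) ≤ K_{1+α,n}`, and the second handles
`j > n / 2`, where `j ^ (-α - 1) ≤ 4 n ^ (-α - 1)`; this gives `C' = 16 C`.
-/

open Finset Real

section LogConvex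

variable {t : ℕ → ℝ}

lemma mul_succ_le_succ_mul_of_sq_le (ht : ∀ n, 0 < t n)
    (hlog : ∀ n, t (n + 1) ^ 2 ≤ t n * t (n + 2)) {j m : ℕ} (hjm : j ≤ m) :
    t m * t (j + 1) ≤ t (m + 1) * t j := by
  have hratio : Monotone fun n => t (n + 1) / t n := by
    refine monotone_nat_of_le_succ fun n => ?_
    rw [div_le_div_iff₀ (ht n) (ht (n + 1))]
    nlinarith [hlog n]
  have := hratio hjm
  simp only at this
  rw [div_le_div_iff₀ (ht j) (ht m)] at this
  linarith

/-- Kaluza's argument: `t (n + 1)` times the identity at `n + 1` minus `t (n + 2)` times the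
identity at `n` expresses `D (n + 1)` through `D 0, …, D n` with coefficients that are nonnegative
by log-convexity. -/
lemma nonneg_of_sum_mul_eq_of_sq_le {D : ℕ → ℝ} {c : ℝ} (ht : ∀ n, 0 < t n)
    (hlog : ∀ n, t (n + 1) ^ 2 ≤ t n * t (n + 2)) (hc : 0 ≤ c)
    (hD : ∀ m, ∑ i ∈ range (m + 1), D i * t (m - i) = c * t (m + 1)) (n : ℕ) :
    0 ≤ D n := by
  induction n using Nat.strong_induction_on with
  | _ n ih =>
  cases n with
  | zero =>
    have h := hD 0
    simp only [zero_add, range_one, sum_singleton, Nat.sub_self] at h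
    have := mul_nonneg hc (ht 1).le
    rw [← h] at this
    exact nonneg_of_mul_nonneg_left this (ht 0)
  | succ n =>
    have hnext := hD (n + 1)
    rw [sum_range_succ, Nat.sub_self] at hnext
    have key : t (n + 1) * t 0 * D (n + 1) = t (n + 2) * ∑ i ∈ range (n + 1), D i * t (n - i)
        - t (n + 1) * ∑ i ∈ range (n + 1), D i * t (n + 1 - i) := by
      rw [hD n]
      linear_combination t (n + 1) * hnext
    rw [mul_sum, mul_sum, ← sum_sub_distrib] at key
    have hsum : 0 ≤ t (n + 1) * t 0 * D (n + 1) := by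
      rw [key]
      refine sum_nonneg fun i hi => ?_
      have hi : i ≤ n := Nat.lt_succ_iff.mp (mem_range.mp hi)
      have hlc := mul_succ_le_succ_mul_of_sq_le ht hlog (j := n - i) (m := n + 1) (by omega)
      rw [show n - i + 1 = n + 1 - i by omega] at hlc
      have := mul_le_mul_of_nonneg_left hlc (ih i (by omega))
      linarith
    exact nonneg_of_mul_nonneg_right hsum (mul_pos (ht _) (ht 0))

end LogConvex

structure IsComplementaryKernel (a P : ℕ → ℝ) : Prop where
  zero : P 0 = 1 / a 0
  succ : ∀ l : ℕ,
    P (l + 1) = (1 / a 0) * ∑ m ∈ range (l + 1), P m * (a (l - m) - a (l + 1 - m))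

namespace IsComplementaryKernel

lemma div_const {a P : ℕ → ℝ} {b : ℝ} (hb : b ≠ 0)
    (hP : IsComplementaryKernel (fun k => a k / b) P) :
    IsComplementaryKernel a (fun k => P k / b) where
  zero := by rw [hP.zero]; field_simp
  succ l := by
    rw [hP.succ l, mul_sum, mul_sum, sum_div]
    exact sum_congr rfl fun m _ => by field_simp

section

variable {a P : ℕ → ℝ} (hP : IsComplementaryKernel a P)
include hP

lemma sum_mul_eq_one (ha0 : a 0 ≠ 0) (m : ℕ) :
    ∑ i ∈ range (m + 1), P i * a (m - i) = 1 := by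
  induction m with
  | zero => simp [hP.zero, ha0]
  | succ m ih =>
    calc ∑ i ∈ range (m + 2), P i * a (m + 1 - i)
        = ∑ i ∈ range (m + 1), P i * a (m + 1 - i)
          + ∑ i ∈ range (m + 1), P i * (a (m - i) - a (m + 1 - i)) := by
          rw [sum_range_succ, Nat.sub_self, hP.succ m]; field_simp
      _ = 1 := by rw [← sum_add_distrib, ← ih]; exact sum_congr rfl fun i _ => by ring

lemma sum_sub_succ_mul_eq (ha0 : a 0 ≠ 0) (m : ℕ) :
    ∑ i ∈ range (m + 1), (P i - P (i + 1)) * a (m - i) = P 0 * a (m + 1) := by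
  have h := hP.sum_mul_eq_one ha0 (m + 1)
  rw [sum_range_succ', Nat.sub_zero] at h
  simp only [Nat.add_sub_add_right] at h
  simp only [sub_mul, sum_sub_distrib, hP.sum_mul_eq_one ha0 m]
  linarith

lemma nonneg (ha0 : 0 < a 0) (ha : Antitone a) (n : ℕ) : 0 ≤ P n := by
  induction n using Nat.strong_induction_on with
  | _ n ih =>
  cases n with
  | zero => rw [hP.zero]; positivity
  | succ l =>
    rw [hP.succ l]
    refine mul_nonneg (by positivity) (sum_nonneg fun m hm => ?_)
    have hm : m ≤ l := Nat.lt_succ_iff.mp (mem_range.mp hm)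
    exact mul_nonneg (ih m (by omega)) (sub_nonneg.mpr (ha (by omega)))

lemma antitone (ha : ∀ n, 0 < a n) (hlog : ∀ n, a (n + 1) ^ 2 ≤ a n * a (n + 2)) :
    Antitone P :=
  antitone_nat_of_succ_le fun n => sub_nonneg.mp <|
    nonneg_of_sum_mul_eq_of_sq_le ha hlog (by rw [hP.zero]; exact (one_div_pos.mpr (ha 0)).le)
      (hP.sum_sub_succ_mul_eq (ha 0).ne') n

lemma mul_sum_le_one (ha0 : 0 < a 0) (ha : Antitone a) (m : ℕ) :
    a m * ∑ i ∈ range (m + 1), P i ≤ 1 := by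
  rw [← hP.sum_mul_eq_one ha0.ne' m, mul_sum]
  exact sum_le_sum fun i _ => by
    rw [mul_comm]; exact mul_le_mul_of_nonneg_left (ha (by omega)) (hP.nonneg ha0 ha i)

lemma succ_mul_mul_le_one (ha : ∀ n, 0 < a n) (ha' : Antitone a)
    (hlog : ∀ n, a (n + 1) ^ 2 ≤ a n * a (n + 2)) (m : ℕ) :
    ((m : ℝ) + 1) * a m * P m ≤ 1 := by
  have hsum : ((m : ℝ) + 1) * P m ≤ ∑ i ∈ range (m + 1), P i := by
    have := card_nsmul_le_sum (range (m + 1)) P (P m)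
      fun i hi => hP.antitone ha hlog (Nat.lt_succ_iff.mp (mem_range.mp hi))
    simpa using this
  calc ((m : ℝ) + 1) * a m * P m = a m * (((m : ℝ) + 1) * P m) := by ring
    _ ≤ a m * ∑ i ∈ range (m + 1), P i := mul_le_mul_of_nonneg_left hsum (ha m).le
    _ ≤ 1 := hP.mul_sum_le_one (ha 0) ha' m

end

end IsComplementaryKernel

lemma sum_Icc_one_sub_eq_sum_range (f : ℕ → ℝ) (n : ℕ) :
    ∑ j ∈ Icc 1 n, f (n - j) = ∑ i ∈ range n, f i := by
  rw [← Ico_add_one_right_eq_Icc, sum_Ico_eq_sum_range, Nat.add_sub_cancel,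
    ← sum_range_reflect f n]
  exact sum_congr rfl fun i _ => by rw [add_comm 1 i, Nat.sub_add_eq, Nat.sub_right_comm]

lemma rpow_le_four_mul_rpow {x y γ : ℝ} (hy : 0 < y) (hyx : y ≤ 2 * x) (hγ2 : -2 ≤ γ)
    (hγ0 : γ ≤ 0) : x ^ γ ≤ 4 * y ^ γ := by
  have h2 : (1 / 4 : ℝ) ≤ 2 ^ γ := by
    calc (1 / 4 : ℝ) = 2 ^ (-2 : ℝ) := by norm_num [rpow_neg, rpow_two]
      _ ≤ 2 ^ γ := rpow_le_rpow_of_exponent_le (by norm_num) hγ2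
  calc x ^ γ ≤ (y / 2) ^ γ := rpow_le_rpow_of_nonpos (by positivity) (by linarith) hγ0
    _ = y ^ γ / 2 ^ γ := div_rpow hy.le (by norm_num) γ
    _ ≤ 4 * y ^ γ := by
      rw [div_le_iff₀ (by positivity)]
      nlinarith [rpow_nonneg hy.le γ]

lemma sum_Icc_rpow_neg_sub_one_le {α : ℝ} (hα : 0 < α) {n : ℕ} (hn : 1 ≤ n) :
    ∑ j ∈ Icc 1 n, (j : ℝ) ^ (-α - 1) ≤ 1 + (1 - (n : ℝ) ^ (-α)) / α := by
  have hanti : AntitoneOn (fun x : ℝ => x ^ (-α - 1)) (Set.Icc (1 : ℕ) n) := by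
    intro x hx y hy hxy
    exact rpow_le_rpow_of_nonpos (by simp at hx; linarith [hx.1]) hxy (by linarith)
  have hint : ∫ x in (1 : ℕ)..(n : ℝ), x ^ (-α - 1) = (1 - (n : ℝ) ^ (-α)) / α := by
    rw [integral_rpow (Or.inr ⟨by linarith, fun h => ?_⟩)]
    · rw [show -α - 1 + 1 = -α by ring]; push_cast; rw [one_rpow]; field_simp; ring
    · rw [Set.mem_uIcc] at h; push_cast at h
      have : (1 : ℝ) ≤ n := by exact_mod_cast hn
      rcases h with h | h <;> linarith [h.1, h.2]
  have hsum := hanti.sum_le_integral_Ico hn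
  rw [hint] at hsum
  rw [← Ico_add_one_right_eq_Icc, sum_eq_sum_Ico_succ_bot (by omega), ← sum_Ico_add']
  simp only [Nat.cast_one, one_rpow]
  push_cast at hsum ⊢
  linarith

lemma two_mul_rpow_le_add {γ : ℝ} (hγ : γ ≤ 0) {x : ℝ} (hx : 1 < x) {c : ℝ}
    (hc : 0 < c) :
    2 * x ^ γ ≤ c * (x - 1) ^ γ + (x + 1) ^ γ / c := by
  have hA : 0 < (x - 1) ^ γ := rpow_pos_of_pos (by linarith) γ
  have hB : 0 < (x + 1) ^ γ := rpow_pos_of_pos (by linarith) γ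
  have hprod : (x ^ γ) ^ 2 ≤ (x - 1) ^ γ * (x + 1) ^ γ := by
    rw [← mul_rpow (by linarith) (by linarith), ← rpow_natCast, ← rpow_mul (by linarith),
      mul_comm γ, rpow_mul (by linarith), rpow_natCast]
    exact rpow_le_rpow_of_nonpos (by nlinarith) (by nlinarith) hγ
  have hS : 0 < c * (x - 1) ^ γ + (x + 1) ^ γ / c := by positivity
  have hsq : (c * (x - 1) ^ γ + (x + 1) ^ γ / c) ^ 2
      = (c * (x - 1) ^ γ - (x + 1) ^ γ / c) ^ 2 + 4 * ((x - 1) ^ γ * (x + 1) ^ γ) := by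
    field_simp; ring
  nlinarith [sq_nonneg (c * (x - 1) ^ γ - (x + 1) ^ γ / c)]

lemma monotoneOn_rpow_skewed_second_diff {β : ℝ} (hβ0 : 0 ≤ β) (hβ1 : β ≤ 1) {c : ℝ}
    (hc : 0 < c) :
    MonotoneOn (fun x : ℝ => c * (x - 1) ^ β + (x + 1) ^ β / c - 2 * x ^ β) (Set.Ici 1) := by
  refine monotoneOn_of_hasDerivWithinAt_nonneg (f' := fun x =>
      β * (c * (x - 1) ^ (β - 1) + (x + 1) ^ (β - 1) / c - 2 * x ^ (β - 1)))
    (convex_Ici 1) ?_ ?_ ?_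
  · have hcont : ∀ d : ℝ, Continuous fun x : ℝ => (x + d) ^ β := fun d =>
      (continuous_id.add continuous_const).rpow_const fun _ => Or.inr hβ0
    have h0 := hcont 0
    have h1 := hcont (-1)
    simp only [add_zero, ← sub_eq_add_neg] at h0 h1
    exact ((h1.const_mul c |>.add ((hcont 1).div_const c)).sub (h0.const_mul 2)).continuousOn
  · intro x hx
    rw [interior_Ici, Set.mem_Ioi] at hx
    have hder : ∀ d : ℝ, x + d ≠ 0 →
        HasDerivAt (fun y : ℝ => (y + d) ^ β) (β * (x + d) ^ (β - 1)) x := fun d hd => by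
      simpa using ((hasDerivAt_id x).add_const d).rpow_const (p := β) (Or.inl hd)
    have h0 := hder 0 (by rw [add_zero]; positivity)
    have h1 := hder (-1) (by linarith)
    have h2 := hder 1 (by linarith)
    simp only [add_zero, ← sub_eq_add_neg] at h0 h1
    exact ((((h1.const_mul c).add (h2.div_const c)).sub (h0.const_mul 2)).congr_deriv
      (by ring)).hasDerivWithinAt
  · intro x hx
    rw [interior_Ici] at hx
    have := two_mul_rpow_le_add (by linarith : β - 1 ≤ 0) hx hc
    exact mul_nonneg hβ0 (by linarith)

noncomputable def l1Weight (β : ℝ) (k : ℕ) : ℝ := ((k : ℝ) + 1) ^ β - (k : ℝ) ^ β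

namespace l1Weight

variable {β : ℝ}

lemma pos (hβ : 0 < β) (k : ℕ) : 0 < l1Weight β k := by
  unfold l1Weight
  have := rpow_lt_rpow (Nat.cast_nonneg k) (lt_add_one (k : ℝ)) hβ
  linarith

lemma antitone (hβ0 : 0 ≤ β) (hβ1 : β ≤ 1) : Antitone (l1Weight β) := by
  refine antitone_nat_of_succ_le fun k => ?_
  have hmid := (concaveOn_rpow hβ0 hβ1).2 (x := (k : ℝ)) (y := (k : ℝ) + 2)
    (by simp) (by simp; positivity) (by norm_num : (0 : ℝ) ≤ 1 / 2)
    (by norm_num : (0 : ℝ) ≤ 1 / 2) (by norm_num)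
  simp only [smul_eq_mul] at hmid
  rw [show 1 / 2 * (k : ℝ) + 1 / 2 * ((k : ℝ) + 2) = k + 1 by ring] at hmid
  simp only [l1Weight, Nat.cast_add, Nat.cast_one]
  rw [show (k : ℝ) + 1 + 1 = k + 2 by ring]
  linarith

lemma rpow_le (hβ0 : 0 ≤ β) (hβ1 : β ≤ 1) (k : ℕ) :
    β * ((k : ℝ) + 1) ^ (β - 1) ≤ l1Weight β k := by
  have hk : (0 : ℝ) < k + 1 := by positivity
  have hs : -1 ≤ -1 / ((k : ℝ) + 1) := by
    rw [neg_div, neg_le_neg_iff, div_le_one hk]; linarith [(Nat.cast_nonneg k : (0 : ℝ) ≤ k)]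
  have hk' : (k : ℝ) = (k + 1) * (1 + -1 / (k + 1)) := by field_simp; ring
  calc β * ((k : ℝ) + 1) ^ (β - 1)
      = ((k : ℝ) + 1) ^ β - ((k : ℝ) + 1) ^ β * (1 + β * (-1 / ((k : ℝ) + 1))) := by
        rw [rpow_sub hk, rpow_one]; field_simp; ring
    _ ≤ ((k : ℝ) + 1) ^ β - ((k : ℝ) + 1) ^ β * (1 + -1 / ((k : ℝ) + 1)) ^ β := by
        gcongr; exact rpow_one_add_le_one_add_mul_self hs hβ0 hβ1
    _ = l1Weight β k := by
        rw [l1Weight, ← mul_rpow hk.le (by linarith), ← hk']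

lemma two_mul_le (hβ0 : 0 ≤ β) (hβ1 : β ≤ 1) {c : ℝ} (hc : 0 < c) (k : ℕ) :
    2 * l1Weight β (k + 1) ≤ c * l1Weight β k + l1Weight β (k + 2) / c := by
  have key := monotoneOn_rpow_skewed_second_diff hβ0 hβ1 hc (a := (k : ℝ) + 1)
    (b := (k : ℝ) + 2) (by simp) (by simp; linarith) (by linarith)
  simp only [l1Weight] at key ⊢
  push_cast
  rw [show (k : ℝ) + 1 - 1 = k by ring, show (k : ℝ) + 2 - 1 = k + 1 by ring] at key
  rw [show (k : ℝ) + 1 + 1 = k + 2 by ring] at key ⊢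
  linear_combination key

lemma sq_le (hβ0 : 0 < β) (hβ1 : β ≤ 1) (k : ℕ) :
    l1Weight β (k + 1) ^ 2 ≤ l1Weight β k * l1Weight β (k + 2) := by
  have hk := pos hβ0 k
  have hk1 := pos hβ0 (k + 1)
  have h := two_mul_le hβ0.le hβ1 (div_pos hk1 hk) k
  field_simp at h
  linarith

end l1Weight

namespace IsComplementaryKernel

section

variable {β : ℝ} {p : ℕ → ℝ} (hp : IsComplementaryKernel (l1Weight β) p)
  (hβ0 : 0 < β) (hβ1 : β ≤ 1)
include hp hβ0 hβ1

lemma l1_nonneg (m : ℕ) : 0 ≤ p m :=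
  hp.nonneg (l1Weight.pos hβ0 0) (l1Weight.antitone hβ0.le hβ1) m

lemma l1_mul_le (m : ℕ) : β * p m ≤ ((m : ℝ) + 1) ^ (-β) := by
  have hm : (0 : ℝ) < m + 1 := by positivity
  have hkernel := hp.succ_mul_mul_le_one (l1Weight.pos hβ0) (l1Weight.antitone hβ0.le hβ1)
    (l1Weight.sq_le hβ0 hβ1) m
  have hw := mul_le_mul_of_nonneg_left (l1Weight.rpow_le hβ0.le hβ1 m)
    (mul_nonneg hm.le (hp.l1_nonneg hβ0 hβ1 m))
  rw [rpow_neg hm.le, ← one_div, le_div_iff₀ (rpow_pos_of_pos hm β)]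
  calc β * p m * ((m : ℝ) + 1) ^ β
      = (m + 1) * p m * (β * ((m : ℝ) + 1) ^ (β - 1)) := by
        rw [rpow_sub hm, rpow_one]; field_simp
    _ ≤ 1 := by linarith

lemma l1_sum_le {n : ℕ} (hn : 1 ≤ n) :
    β * ∑ i ∈ range n, p i ≤ (n : ℝ) ^ (1 - β) := by
  obtain ⟨m, rfl⟩ : ∃ m, n = m + 1 := ⟨n - 1, by omega⟩
  have hm : (0 : ℝ) < m + 1 := by positivity
  have hsum := hp.mul_sum_le_one (l1Weight.pos hβ0 0) (l1Weight.antitone hβ0.le hβ1) m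
  have hw := mul_le_mul_of_nonneg_right (l1Weight.rpow_le hβ0.le hβ1 m)
    (sum_nonneg fun i (_ : i ∈ range (m + 1)) => hp.l1_nonneg hβ0 hβ1 i)
  push_cast
  rw [show 1 - β = -(β - 1) by ring, rpow_neg hm.le, ← one_div,
    le_div_iff₀ (rpow_pos_of_pos hm _)]
  linarith

end

section

variable {α : ℝ} {p : ℕ → ℝ} (hp : IsComplementaryKernel (l1Weight (1 - α)) p)
  (hα0 : 0 < α) (hα1 : α < 1)
include hp hα0 hα1

lemma l1_mul_rpow_le_add {n j : ℕ} (hj : j ∈ Icc 1 n) :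
    (1 - α) * p (n - j) * (j : ℝ) ^ (-α - 1)
      ≤ 4 * (n : ℝ) ^ (-α - 1) * ((1 - α) * p (n - j))
        + 4 * (n : ℝ) ^ (α - 1) * (j : ℝ) ^ (-α - 1) := by
  obtain ⟨hj1, hjn⟩ := mem_Icc.mp hj
  have hβ0 : 0 < 1 - α := by linarith
  have hβ1 : 1 - α ≤ 1 := by linarith
  have hpn : 0 ≤ (1 - α) * p (n - j) := mul_nonneg hβ0.le (hp.l1_nonneg hβ0 hβ1 _)
  have hn : (0 : ℝ) < n := by exact_mod_cast (show 0 < n by omega)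
  have hjpos : (0 : ℝ) ≤ (j : ℝ) ^ (-α - 1) := by positivity
  rcases lt_or_ge n (2 * j) with hlt | hle
  · have hj := rpow_le_four_mul_rpow (x := j) (γ := -α - 1) hn (by exact_mod_cast hlt.le)
      (by linarith) (by linarith)
    have : 0 ≤ 4 * (n : ℝ) ^ (α - 1) * (j : ℝ) ^ (-α - 1) := by positivity
    nlinarith
  · have hp' := hp.l1_mul_le hβ0 hβ1 (n - j)
    rw [neg_sub, show ((n - j : ℕ) : ℝ) = n - j by push_cast [hjn]; ring] at hp'
    have hpow := rpow_le_four_mul_rpow (x := (n : ℝ) - j + 1) (γ := α - 1) hn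
      (by have : (2 * j : ℝ) ≤ n := by exact_mod_cast hle
          linarith) (by linarith) (by linarith)
    have : 0 ≤ 4 * (n : ℝ) ^ (-α - 1) * ((1 - α) * p (n - j)) := by positivity
    nlinarith

lemma l1_sum_mul_rpow_le {n : ℕ} (hn : 1 ≤ n) :
    (1 - α) * ∑ j ∈ Icc 1 n, p (n - j) * (j : ℝ) ^ (-α - 1)
      ≤ 8 * (1 + (1 - (n : ℝ) ^ (-α)) / α) * (n : ℝ) ^ (α - 1) := by
  have hβ0 : 0 < 1 - α := by linarith
  have hn' : (1 : ℝ) ≤ n := by exact_mod_cast hn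
  have hsum := hp.l1_sum_le hβ0 (by linarith) hn
  rw [← sum_Icc_one_sub_eq_sum_range, sub_sub_cancel] at hsum
  have hK := sum_Icc_rpow_neg_sub_one_le hα0 hn
  have hK1 : 1 ≤ 1 + (1 - (n : ℝ) ^ (-α)) / α := by
    have : (n : ℝ) ^ (-α) ≤ 1 := rpow_le_one_of_one_le_of_nonpos hn' (by linarith)
    have : 0 ≤ (1 - (n : ℝ) ^ (-α)) / α := div_nonneg (by linarith) hα0.le
    linarith
  have hpow : (n : ℝ) ^ (-α - 1) * (n : ℝ) ^ α ≤ (n : ℝ) ^ (α - 1) := by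
    rw [← rpow_add (by linarith)]
    exact rpow_le_rpow_of_exponent_le hn' (by linarith)
  calc (1 - α) * ∑ j ∈ Icc 1 n, p (n - j) * (j : ℝ) ^ (-α - 1)
      ≤ ∑ j ∈ Icc 1 n, (4 * (n : ℝ) ^ (-α - 1) * ((1 - α) * p (n - j))
          + 4 * (n : ℝ) ^ (α - 1) * (j : ℝ) ^ (-α - 1)) := by
        rw [mul_sum]
        exact sum_le_sum fun j hj => by
          rw [← mul_assoc]; exact hp.l1_mul_rpow_le_add hα0 hα1 hj
    _ = 4 * (n : ℝ) ^ (-α - 1) * ((1 - α) * ∑ j ∈ Icc 1 n, p (n - j))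
          + 4 * (n : ℝ) ^ (α - 1) * ∑ j ∈ Icc 1 n, (j : ℝ) ^ (-α - 1) := by
        rw [sum_add_distrib, ← mul_sum, ← mul_sum, ← mul_sum]
    _ ≤ 4 * (n : ℝ) ^ (α - 1)
          + 4 * (n : ℝ) ^ (α - 1) * (1 + (1 - (n : ℝ) ^ (-α)) / α) := by
        have h0 : 0 ≤ (n : ℝ) ^ (-α - 1) := by positivity
        refine add_le_add ?_ (mul_le_mul_of_nonneg_left hK (by positivity))
        nlinarith [mul_le_mul_of_nonneg_left hsum h0]
    _ ≤ 8 * (1 + (1 - (n : ℝ) ^ (-α)) / α) * (n : ℝ) ^ (α - 1) := by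
        nlinarith [rpow_nonneg (by linarith : (0 : ℝ) ≤ n) (α - 1)]

end

end IsComplementaryKernel

/-- If `|R^j| ≤ C j^{-α-1}` for `1 ≤ j ≤ n`, then
`∑_{j=1}^n P_{n-j} |R^j| ≤ C' Γ(2-α) K_{1+α,n} ρ^α n^{α-1}`. -/
theorem stmt_10 (α C : ℝ) (hα0 : 0 < α) (hα1 : α ≤ 1 / 2) (hC : 0 < C) :
    ∃ C' : ℝ, 0 < C' ∧
      ∀ (ρ : ℝ), 0 < ρ →
      ∀ (a P R : ℕ → ℝ),
      (∀ k : ℕ, a k = (((k : ℝ) + 1) ^ (1 - α) - (k : ℝ) ^ (1 - α)) /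
        (Real.Gamma (2 - α) * ρ ^ α)) →
      P 0 = 1 / a 0 →
      (∀ l : ℕ, P (l + 1) =
        (1 / a 0) * ∑ m ∈ Finset.range (l + 1), P m * (a (l - m) - a (l + 1 - m))) →
      ∀ n : ℕ, 1 ≤ n →
      (∀ j : ℕ, 1 ≤ j → j ≤ n → |R j| ≤ C * (j : ℝ) ^ (-α - 1)) →
      ∑ j ∈ Finset.Icc 1 n, P (n - j) * |R j|
        ≤ C' * Real.Gamma (2 - α) * (1 + (1 - (n : ℝ) ^ (-α)) / α) *
          ρ ^ α * (n : ℝ) ^ (α - 1) := by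
  refine ⟨16 * C, by positivity, fun ρ hρ a P R ha hP0 hrec n hn hR => ?_⟩
  set b := Real.Gamma (2 - α) * ρ ^ α
  have hb : 0 < b := mul_pos (Gamma_pos_of_pos (by linarith)) (rpow_pos_of_pos hρ α)
  have ha' : a = fun k => l1Weight (1 - α) k / b := funext ha
  subst ha'
  have hp := IsComplementaryKernel.div_const hb.ne' ⟨hP0, hrec⟩
  have hp_nonneg := hp.l1_nonneg (by linarith) (by linarith)
  have hmain := hp.l1_sum_mul_rpow_le hα0 (by linarith) hn
  have hsum_nonneg : 0 ≤ ∑ j ∈ Icc 1 n, P (n - j) / b * (j : ℝ) ^ (-α - 1) :=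
    sum_nonneg fun j _ => mul_nonneg (hp_nonneg _) (by positivity)
  calc ∑ j ∈ Icc 1 n, P (n - j) * |R j|
      ≤ ∑ j ∈ Icc 1 n, P (n - j) * (C * (j : ℝ) ^ (-α - 1)) := by
        refine sum_le_sum fun j hj => mul_le_mul_of_nonneg_left ?_ ?_
        · exact hR j (mem_Icc.mp hj).1 (mem_Icc.mp hj).2
        · simpa [div_mul_cancel₀ _ hb.ne'] using mul_nonneg (hp_nonneg (n - j)) hb.le
    _ = C * b * ∑ j ∈ Icc 1 n, P (n - j) / b * (j : ℝ) ^ (-α - 1) := by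
        rw [mul_sum]
        exact sum_congr rfl fun j _ => by field_simp
    _ ≤ C * b * (16 * (1 + (1 - (n : ℝ) ^ (-α)) / α) * (n : ℝ) ^ (α - 1)) := by
        gcongr
        nlinarith
    _ = _ := by ring
end

section
/- With λ ≥ 0, 0 < α < 1, and (i-1)N+1 ≤ n ≤ iN, the sum ∑_{q=0}^{i-1} λ^q ε_{n-qN}^{(q)} is bounded by C (1 + ∑_{q=1}^{i-1} λ^q (Γ(2-α))^{q-1}/Γ(qα+1) · t_{n-qN}^{qα}), where ε_{n-qN}^{(q)} denotes the first entry of J^q Z_2 with Z_2 = (1,...,1)^T, ε^{(0)}_n = 1, t_m = mρ, and C depends only on α and i. -/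
/-!
The weights `P` invert the Toeplitz kernel `a`: `∑_{m ≤ l} P_m a_{l-m} = 1`. As `a` is positive and
decreasing (concavity of `x ↦ x^(1-α)`), the weights are nonnegative and
`∑_{m < M} P_m ≤ 1 / a_{M-1} ≤ Γ(2-α)/(1-α) · (Mρ)^α`, the last step by Bernoulli's inequality.
The matrix `J` is this kernel shifted `N` places above the diagonal, so entry `k` of `J^q Z₂` only
sees indices below `n - k - qN` and is at most `(∑_{m < n-k-qN} P_m)^q`. For `k = 0` this is
`(Γ(2-α)/(1-α))^q t_{n-qN}^{qα}`, and the constant absorbs the ratios of these prefactors to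
`Γ(2-α)^(q-1) / Γ(qα+1)`.
-/
open Finset

theorem one_sub_le_rpow_mul_rpow_sub_rpow {α x : ℝ} (hα0 : 0 ≤ α) (hα1 : α ≤ 1) (hx : 1 ≤ x) :
    1 - α ≤ x ^ α * (x ^ (1 - α) - (x - 1) ^ (1 - α)) := by
  have hx0 : 0 < x := one_pos.trans_le hx
  have hs : -1 ≤ -1 / x := by
    rw [neg_div, neg_le_neg_iff, div_le_one hx0]; exact hx
  have hbern := rpow_one_add_le_one_add_mul_self hs (by linarith) (by linarith : 1 - α ≤ 1)
  have hxx : x ^ α * x ^ (1 - α) = x := by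
    rw [← Real.rpow_add hx0, add_sub_cancel, Real.rpow_one]
  have hsplit : x - 1 = x * (1 + -1 / x) := by field_simp; ring
  rw [hsplit, Real.mul_rpow hx0.le (by linarith), mul_sub, ← mul_assoc, hxx]
  have : x * (1 + (1 - α) * (-1 / x)) = x - (1 - α) := by field_simp; ring
  nlinarith

noncomputable def l1Coeff (α ρ : ℝ) (k : ℕ) : ℝ :=
  (((k : ℝ) + 1) ^ (1 - α) - (k : ℝ) ^ (1 - α)) / (Real.Gamma (2 - α) * ρ ^ α)

section L1Coeff

variable {α ρ : ℝ}

theorem l1Coeff_denom_pos (hα1 : α < 1) (hρ : 0 < ρ) : 0 < Real.Gamma (2 - α) * ρ ^ α :=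
  mul_pos (Real.Gamma_pos_of_pos (by linarith)) (Real.rpow_pos_of_pos hρ α)

theorem l1Coeff_pos (hα1 : α < 1) (hρ : 0 < ρ) (k : ℕ) : 0 < l1Coeff α ρ k := by
  refine div_pos ?_ (l1Coeff_denom_pos hα1 hρ)
  rw [sub_pos]
  exact Real.rpow_lt_rpow (Nat.cast_nonneg k) (lt_add_one _) (by linarith)

theorem l1Coeff_antitone (hα0 : 0 ≤ α) (hα1 : α < 1) (hρ : 0 < ρ) :
    Antitone (l1Coeff α ρ) := by
  refine antitone_nat_of_succ_le fun k => ?_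
  have hslope := (Real.concaveOn_rpow (by linarith : 0 ≤ 1 - α) (by linarith)).slope_anti_adjacent
    (Set.mem_Ici.mpr (Nat.cast_nonneg k)) (Set.mem_Ici.mpr (by positivity : (0 : ℝ) ≤ k + 2))
    (lt_add_one (k : ℝ)) (by linarith : (k : ℝ) + 1 < k + 2)
  norm_num only [add_sub_cancel_left, div_one, show (k : ℝ) + 2 - (k + 1) = 1 by ring] at hslope
  refine div_le_div_of_nonneg_right ?_ (l1Coeff_denom_pos hα1 hρ).le
  push_cast
  rw [add_assoc, one_add_one_eq_two]
  linarith

theorem one_div_l1Coeff_le (hα0 : 0 ≤ α) (hα1 : α < 1) (hρ : 0 < ρ) (M : ℕ) :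
    1 / l1Coeff α ρ M ≤ Real.Gamma (2 - α) / (1 - α) * ρ ^ α * ((M : ℝ) + 1) ^ α := by
  have hx : (1 : ℝ) ≤ M + 1 := by simp
  have hkey := one_sub_le_rpow_mul_rpow_sub_rpow hα0 hα1.le hx
  rw [add_sub_cancel_right] at hkey
  have hnum : 0 < ((M : ℝ) + 1) ^ (1 - α) - (M : ℝ) ^ (1 - α) :=
    sub_pos.mpr (Real.rpow_lt_rpow (Nat.cast_nonneg M) (lt_add_one _) (by linarith))
  have hd := l1Coeff_denom_pos hα1 hρ
  unfold l1Coeff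
  rw [one_div_div, div_le_iff₀ hnum]
  calc Real.Gamma (2 - α) * ρ ^ α
      = Real.Gamma (2 - α) * ρ ^ α / (1 - α) * (1 - α) := by field_simp [(by linarith : 1 - α ≠ 0)]
    _ ≤ Real.Gamma (2 - α) * ρ ^ α / (1 - α) *
          (((M : ℝ) + 1) ^ α * (((M : ℝ) + 1) ^ (1 - α) - (M : ℝ) ^ (1 - α))) := by
        gcongr
    _ = _ := by ring

end L1Coeff

section L1Weights

variable {a P : ℕ → ℝ} (hP0 : P 0 = 1 / a 0)
  (hPrec : ∀ l : ℕ, P (l + 1) =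
    (1 / a 0) * ∑ m ∈ Finset.range (l + 1), P m * (a (l - m) - a (l + 1 - m)))
include hP0 hPrec

theorem sum_weights_mul_eq_one (ha0 : a 0 ≠ 0) (l : ℕ) :
    ∑ m ∈ range (l + 1), P m * a (l - m) = 1 := by
  induction l with
  | zero => simp [hP0, ha0]
  | succ l ih =>
    have hlast : P (l + 1) * a 0 = ∑ m ∈ range (l + 1), P m * (a (l - m) - a (l + 1 - m)) := by
      rw [hPrec l, one_div, mul_right_comm, inv_mul_cancel₀ ha0, one_mul]
    rw [sum_range_succ, Nat.sub_self, hlast, ← ih, ← sum_add_distrib]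
    exact sum_congr rfl fun m _ => by ring

theorem weights_nonneg (ha0 : 0 < a 0) (ha_anti : Antitone a) (m : ℕ) : 0 ≤ P m := by
  induction m using Nat.strong_induction_on with
  | _ m ih =>
    have ha0' : 0 ≤ 1 / a 0 := (one_div_pos.mpr ha0).le
    cases m with
    | zero => rw [hP0]; exact ha0'
    | succ l =>
      rw [hPrec l]
      refine mul_nonneg ha0' (sum_nonneg fun m hm => mul_nonneg (ih m (by simpa using hm)) ?_)
      rw [sub_nonneg]
      exact ha_anti (by omega)

theorem sum_weights_le_one_div {M : ℕ} (haM : 0 < a M) (ha_anti : Antitone a) :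
    ∑ m ∈ range (M + 1), P m ≤ 1 / a M := by
  have ha0 : 0 < a 0 := haM.trans_le (ha_anti (Nat.zero_le M))
  rw [le_div_iff₀ haM, sum_mul, ← sum_weights_mul_eq_one hP0 hPrec ha0.ne' M]
  exact sum_le_sum fun m _ =>
    mul_le_mul_of_nonneg_left (ha_anti (Nat.sub_le M m)) (weights_nonneg hP0 hPrec ha0 ha_anti m)

end L1Weights

section L1CoeffWeights

variable {α ρ : ℝ} (hα0 : 0 ≤ α) (hα1 : α < 1) (hρ : 0 < ρ) {P : ℕ → ℝ}
  (hP0 : P 0 = 1 / l1Coeff α ρ 0)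
  (hPrec : ∀ l : ℕ, P (l + 1) = (1 / l1Coeff α ρ 0) *
    ∑ m ∈ Finset.range (l + 1), P m * (l1Coeff α ρ (l - m) - l1Coeff α ρ (l + 1 - m)))
include hα0 hα1 hρ hP0 hPrec

theorem l1Weights_nonneg (m : ℕ) : 0 ≤ P m :=
  weights_nonneg hP0 hPrec (l1Coeff_pos hα1 hρ 0) (l1Coeff_antitone hα0 hα1 hρ) m

theorem sum_l1Weights_le (M : ℕ) :
    ∑ m ∈ range M, P m ≤ Real.Gamma (2 - α) / (1 - α) * ρ ^ α * (M : ℝ) ^ α := by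
  cases M with
  | zero =>
    have hK : 0 < Real.Gamma (2 - α) / (1 - α) :=
      div_pos (Real.Gamma_pos_of_pos (by linarith)) (by linarith)
    simp only [range_zero, sum_empty]
    positivity
  | succ M =>
    push_cast
    exact (sum_weights_le_one_div hP0 hPrec (l1Coeff_pos hα1 hρ M)
      (l1Coeff_antitone hα0 hα1 hρ)).trans (one_div_l1Coeff_le hα0 hα1 hρ M)

end L1CoeffWeights

theorem sum_fin_ite_eq_sum_range {n : ℕ} (f : ℕ → ℝ) {a b : ℕ} (hb : b ≤ n) :
    ∑ l : Fin n, (if a ≤ (l : ℕ) ∧ (l : ℕ) < b then f ((l : ℕ) - a) else 0) =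
      ∑ m ∈ range (b - a), f m := by
  rw [Fin.sum_univ_eq_sum_range (fun l => if a ≤ l ∧ l < b then f (l - a) else 0), ← sum_filter]
  have hfilter : (range n).filter (fun l => a ≤ l ∧ l < b) = Ico a b := by
    ext l; simp only [mem_filter, mem_range, mem_Ico]; omega
  rw [hfilter, sum_Ico_eq_sum_range]
  simp only [add_tsub_cancel_left]

section BlockToeplitz

variable {n N : ℕ} {P : ℕ → ℝ} (hP : ∀ m, 0 ≤ P m) {J : Matrix (Fin n) (Fin n) ℝ}
  (hJ : ∀ k l : Fin n, J k l =
    if (k : ℕ) + N ≤ (l : ℕ) then P ((l : ℕ) - (k : ℕ) - N) else 0)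
include hP hJ

theorem pow_mulVec_one_le (q : ℕ) (k : Fin n) :
    ((J ^ q).mulVec (fun _ => (1 : ℝ))) k ≤ (∑ m ∈ range (n - k - q * N), P m) ^ q := by
  induction q generalizing k with
  | zero => simp
  | succ q ih =>
    set w := (J ^ q).mulVec (fun _ => (1 : ℝ))
    set D := ∑ m ∈ range (n - k - (q + 1) * N), P m
    have hqN : (q + 1) * N = q * N + N := add_one_mul q N
    have hterm : ∀ l : Fin n, J k l * w l ≤
        (if (k : ℕ) + N ≤ l ∧ (l : ℕ) < n - q * N then P ((l : ℕ) - (k + N)) else 0) * D ^ q := by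
      intro l
      rw [hJ, Nat.sub_sub]
      split_ifs with hkl hl hl
      · obtain ⟨-, hl⟩ := hl
        refine mul_le_mul_of_nonneg_left ((ih l).trans ?_) (hP _)
        exact pow_le_pow_left₀ (sum_nonneg fun m _ => hP m)
          (sum_le_sum_of_subset_of_nonneg (range_subset_range.mpr (by omega))
            fun m _ _ => hP m) q
      · -- `w l` vanishes: its bound is an empty sum, raised to the power `q ≠ 0` since `l < n`
        have hq : q ≠ 0 := by rintro rfl; exact hl ⟨hkl, by omega⟩
        have hw := ih l
        rw [show n - l - q * N = 0 by omega, range_zero, sum_empty, zero_pow hq] at hw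
        nlinarith [hP ((l : ℕ) - (k + N))]
      · exact absurd hl.1 hkl
      · simp
    calc ((J ^ (q + 1)).mulVec (fun _ => (1 : ℝ))) k
        = ∑ l : Fin n, J k l * w l := by rw [pow_succ', ← Matrix.mulVec_mulVec]; rfl
      _ ≤ ∑ l : Fin n, (if (k : ℕ) + N ≤ l ∧ (l : ℕ) < n - q * N
            then P ((l : ℕ) - (k + N)) else 0) * D ^ q := sum_le_sum fun l _ => hterm l
      _ = D ^ (q + 1) := by
        rw [← sum_mul, sum_fin_ite_eq_sum_range P (Nat.sub_le n _), pow_succ']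
        congr 3
        omega

end BlockToeplitz

theorem l1_pow_mulVec_one_le {α ρ : ℝ} (hα0 : 0 ≤ α) (hα1 : α < 1) (hρ : 0 < ρ) {n N : ℕ}
    {P : ℕ → ℝ} (hP0 : P 0 = 1 / l1Coeff α ρ 0)
    (hPrec : ∀ l : ℕ, P (l + 1) = (1 / l1Coeff α ρ 0) *
      ∑ m ∈ Finset.range (l + 1), P m * (l1Coeff α ρ (l - m) - l1Coeff α ρ (l + 1 - m)))
    {J : Matrix (Fin n) (Fin n) ℝ}
    (hJ : ∀ k l : Fin n, J k l =
      if (k : ℕ) + N ≤ (l : ℕ) then P ((l : ℕ) - (k : ℕ) - N) else 0)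
    (q : ℕ) (k : Fin n) :
    ((J ^ q).mulVec (fun _ => (1 : ℝ))) k ≤
      (Real.Gamma (2 - α) / (1 - α)) ^ q * (((n - k - q * N : ℕ) : ℝ) * ρ) ^ ((q : ℝ) * α) := by
  have hP := l1Weights_nonneg hα0 hα1 hρ hP0 hPrec
  refine (pow_mulVec_one_le hP hJ q k).trans ?_
  refine (pow_le_pow_left₀ (sum_nonneg fun m _ => hP m)
    (sum_l1Weights_le hα0 hα1 hρ hP0 hPrec _) q).trans_eq ?_
  rw [mul_assoc, mul_comm (ρ ^ α), ← Real.mul_rpow (Nat.cast_nonneg _) hρ.le, mul_pow,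
    ← Real.rpow_natCast (_ ^ α), ← Real.rpow_mul (by positivity), mul_comm α]

theorem one_add_sum_le_mul_one_add_sum {ι : Type*} (s : Finset ι) {x y : ι → ℝ} {C : ℝ}
    (hC : 1 ≤ C) (hy : ∀ q ∈ s, y q ≤ C * x q) :
    1 + ∑ q ∈ s, y q ≤ C * (1 + ∑ q ∈ s, x q) := by
  rw [mul_add, mul_one, mul_sum]
  exact add_le_add hC (sum_le_sum hy)

theorem Gamma_nat_mul_add_one_pos {α : ℝ} (hα0 : 0 ≤ α) (q : ℕ) :
    0 < Real.Gamma ((q : ℝ) * α + 1) :=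
  Real.Gamma_pos_of_pos (by positivity)

noncomputable def prefactorRatio (α : ℝ) (q : ℕ) : ℝ :=
  (Real.Gamma (2 - α) / (1 - α)) ^ q * Real.Gamma ((q : ℝ) * α + 1) / Real.Gamma (2 - α) ^ (q - 1)

section PrefactorRatio

variable {α : ℝ} (hα0 : 0 ≤ α) (hα1 : α < 1)
include hα0 hα1

theorem prefactorRatio_nonneg (q : ℕ) : 0 ≤ prefactorRatio α q := by
  have := Gamma_nat_mul_add_one_pos hα0 q
  have : 0 < Real.Gamma (2 - α) := Real.Gamma_pos_of_pos (by linarith)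
  have : 0 < 1 - α := by linarith
  unfold prefactorRatio
  positivity

theorem div_one_sub_pow_eq_prefactorRatio_mul (q : ℕ) :
    (Real.Gamma (2 - α) / (1 - α)) ^ q =
      prefactorRatio α q * (Real.Gamma (2 - α) ^ (q - 1) / Real.Gamma ((q : ℝ) * α + 1)) := by
  have := Gamma_nat_mul_add_one_pos hα0 q
  have : 0 < Real.Gamma (2 - α) := Real.Gamma_pos_of_pos (by linarith)
  unfold prefactorRatio
  field_simp

end PrefactorRatio

/-- Bound on `∑_{q=0}^{i-1} λ^q ε_{n-qN}^{(q)}`, where `ε_{n-qN}^{(q)}` is the first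
entry of `J^q Z₂`, `Z₂ = (1,…,1)ᵀ`, and `ε^{(0)} = 1`. -/
theorem stmt_18 (α : ℝ) (hα0 : 0 < α) (hα1 : α < 1) (i : ℕ) (hi : 1 ≤ i) :
    ∃ C : ℝ, 0 < C ∧
      ∀ (ρ : ℝ) (_ : 0 < ρ)
        (N n : ℕ) (_ : 1 ≤ N) (hn1 : (i - 1) * N + 1 ≤ n) (_ : n ≤ i * N)
        (lam : ℝ) (_ : 0 ≤ lam)
        (a P : ℕ → ℝ)
        (_ : ∀ k : ℕ, a k = (((k : ℝ) + 1) ^ (1 - α) - (k : ℝ) ^ (1 - α)) /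
          (Real.Gamma (2 - α) * ρ ^ α))
        (_ : P 0 = 1 / a 0)
        (_ : ∀ l : ℕ, P (l + 1) =
          (1 / a 0) * ∑ m ∈ Finset.range (l + 1), P m * (a (l - m) - a (l + 1 - m)))
        (J : Matrix (Fin n) (Fin n) ℝ)
        (_ : ∀ k l : Fin n, J k l =
          if (k : ℕ) + N ≤ (l : ℕ) then P ((l : ℕ) - (k : ℕ) - N) else 0),
      ∑ q ∈ Finset.range i,
          lam ^ q * (if q = 0 then 1 else ((J ^ q).mulVec (fun _ => (1 : ℝ))) ⟨0, by omega⟩)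
        ≤ C * (1 + ∑ q ∈ Finset.Icc 1 (i - 1),
            lam ^ q * (Real.Gamma (2 - α)) ^ (q - 1) / Real.Gamma ((q : ℝ) * α + 1) *
              (((n - q * N : ℕ) : ℝ) * ρ) ^ ((q : ℝ) * α)) := by
  set C := 1 + ∑ q ∈ Icc 1 (i - 1), prefactorRatio α q
  have hC : 1 ≤ C :=
    le_add_of_nonneg_right (sum_nonneg fun q _ => prefactorRatio_nonneg hα0.le hα1 q)
  refine ⟨C, by linarith, fun ρ hρ N n _ hn1 _ lam hlam a P ha hP0 hPrec J hJ => ?_⟩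
  obtain rfl : a = l1Coeff α ρ := funext ha
  have hsplit : range i = insert 0 (Icc 1 (i - 1)) := by
    ext q
    simp only [mem_range, mem_insert, mem_Icc]
    omega
  rw [hsplit, sum_insert (by simp), if_pos rfl, pow_zero, one_mul]
  refine one_add_sum_le_mul_one_add_sum _ hC fun q hq => ?_
  rw [if_neg (by simp at hq; omega)]
  have hε := l1_pow_mulVec_one_le hα0.le hα1 hρ hP0 hPrec hJ q ⟨0, by omega⟩
  rw [Nat.sub_zero, div_one_sub_pow_eq_prefactorRatio_mul hα0.le hα1] at hε
  have hq_le : prefactorRatio α q ≤ C :=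
    le_add_of_nonneg_of_le zero_le_one
      (single_le_sum (fun q _ => prefactorRatio_nonneg hα0.le hα1 q) hq)
  have := Gamma_nat_mul_add_one_pos hα0.le q
  have : 0 < Real.Gamma (2 - α) := Real.Gamma_pos_of_pos (by linarith)
  calc lam ^ q * ((J ^ q).mulVec (fun _ => (1 : ℝ))) ⟨0, _⟩
      ≤ lam ^ q * (prefactorRatio α q * (Real.Gamma (2 - α) ^ (q - 1) /
          Real.Gamma ((q : ℝ) * α + 1)) * (((n - q * N : ℕ) : ℝ) * ρ) ^ ((q : ℝ) * α)) := by
        gcongr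
    _ ≤ lam ^ q * (C * (Real.Gamma (2 - α) ^ (q - 1) /
          Real.Gamma ((q : ℝ) * α + 1)) * (((n - q * N : ℕ) : ℝ) * ρ) ^ ((q : ℝ) * α)) := by
        gcongr
    _ = _ := by ring
end
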